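/- arXiv:2306.14236 — 2 statements merged into one kernel-verified Lean document; each statement's English description precedes it below -/
import Mathlib

section
/- Let M ⊆ 𝔽₂ⁿ \ {0} be a finite nonempty Eulerian set with rank r ≥ 2. Then M contains a circuit of size at least log|M| / log r. -/
open Finset

/-- A circuit: a minimal nonempty subset of the ambient group minus `{0}` with zero sum. -/
def IsCircuit {V : Type*} [AddCommGroup V] [DecidableEq V] (C : Finset V) : Prop :=
  C.Nonempty ∧ (0 : V) ∉ C ∧ ∑ x ∈ C, x = 0 ∧
    ∀ D ⊆ C, D.Nonempty → ∑ x ∈ D, x = 0 → D = C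
/-- rank: maximum size of a linearly independent subset of `M`. -/
noncomputable def rk {n : ℕ} (M : Finset (Fin n → ZMod 2)) : ℕ :=
  sSup {k : ℕ | ∃ s ⊆ M, s.card = k ∧
    LinearIndependent (ZMod 2) (fun x : s => (x : Fin n → ZMod 2))}

/-! Let `B ⊆ M` be a maximal independent set, so `|B| = r` and every `x ∈ M` is the sum of a
unique subset of `B`. If `A` is such a representing subset of maximal size `s`, then
`A ∪ {∑ A}` is a circuit of size `s + 1`; here the Eulerian condition is what rules out
`s ≤ 1`, which would force `M ⊆ B`. Distinct elements of `M` have distinct representing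
subsets, so `|M| ≤ ∑_{i ≤ s} (r choose i) ≤ r ^ (s + 1)`. -/

section SubsetSums

variable {R V : Type*} [Ring R] [Nontrivial R] [AddCommGroup V] [Module R V]

theorem LinearIndepOn.eq_of_subset_of_sum_eq {B D₁ D₂ : Finset V}
    (hB : LinearIndepOn R id (B : Set V)) (h₁ : D₁ ⊆ B) (h₂ : D₂ ⊆ B)
    (h : ∑ x ∈ D₁, x = ∑ x ∈ D₂, x) : D₁ = D₂ := by
  classical
  set g : V → R := fun x => (if x ∈ D₁ then 1 else 0) - if x ∈ D₂ then 1 else 0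
  have hg : ∑ x ∈ D₁ ∪ D₂, g x • id x = 0 := by
    simp only [g, id, sub_smul, ite_smul, one_smul, zero_smul, sum_sub_distrib, sum_ite_mem,
      union_inter_cancel_left, union_inter_cancel_right, h, sub_self]
  have hg0 := linearIndepOn_iff'.mp hB _ g (mod_cast union_subset h₁ h₂) hg
  ext x
  by_cases hx₁ : x ∈ D₁ <;> by_cases hx₂ : x ∈ D₂ <;> simp only [hx₁, hx₂]
  · simpa [g, hx₁, hx₂] using hg0 x (mem_union_left _ hx₁)
  · simpa [g, hx₁, hx₂] using hg0 x (mem_union_right _ hx₂)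

theorem LinearIndepOn.eq_empty_of_subset_of_sum_eq_zero {B D : Finset V}
    (hB : LinearIndepOn R id (B : Set V)) (hD : D ⊆ B) (h : ∑ x ∈ D, x = 0) : D = ∅ :=
  hB.eq_of_subset_of_sum_eq hD (empty_subset B) (by rw [h, sum_empty])

end SubsetSums

theorem card_filter_powerset_card_le_le_pow {α : Type*} {B : Finset α} (hB : 2 ≤ #B) (s : ℕ) :
    #{A ∈ B.powerset | #A ≤ s} ≤ #B ^ (s + 1) := by
  classical
  calc #{A ∈ B.powerset | #A ≤ s}
      ≤ #((range (s + 1)).biUnion B.powersetCard) := by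
        refine card_le_card fun A hA => ?_
        rw [mem_filter, mem_powerset] at hA
        exact mem_biUnion.mpr
          ⟨#A, mem_range.mpr (Nat.lt_succ_of_le hA.2), mem_powersetCard.mpr ⟨hA.1, rfl⟩⟩
    _ ≤ ∑ i ∈ range (s + 1), #(B.powersetCard i) := card_biUnion_le
    _ ≤ ∑ i ∈ range (s + 1), #B ^ i := by
        gcongr with i
        rw [card_powersetCard]
        exact Nat.choose_le_pow _ _
    _ ≤ #B ^ (s + 1) := (Nat.geomSum_lt hB fun _ => mem_range.mp).le

section ZModTwo

variable {V : Type*} [AddCommGroup V] [Module (ZMod 2) V]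

theorem exists_subset_sum_eq_of_mem_span {B : Finset V} {x : V}
    (hx : x ∈ Submodule.span (ZMod 2) (B : Set V)) : ∃ A ⊆ B, ∑ a ∈ A, a = x := by
  obtain ⟨f, -, rfl⟩ := Submodule.mem_span_finset.mp hx
  refine ⟨{b ∈ B | f b = 1}, filter_subset _ _, ?_⟩
  rw [sum_filter]
  refine sum_congr rfl fun b _ => ?_
  rcases (by decide : ∀ a : ZMod 2, a = 0 ∨ a = 1) (f b) with h | h <;> simp [h]

theorem isCircuit_insert_sum [DecidableEq V] {A B : Finset V}
    (hB : LinearIndepOn (ZMod 2) id (B : Set V)) (hAB : A ⊆ B) (hB0 : (0 : V) ∉ B)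
    (hA : ∑ a ∈ A, a ∉ A) (hA0 : ∑ a ∈ A, a ≠ 0) :
    IsCircuit (insert (∑ a ∈ A, a) A) := by
  set x := ∑ a ∈ A, a
  refine ⟨insert_nonempty _ _, ?_, ?_, fun D hD hDne hD0 => ?_⟩
  · rw [mem_insert, not_or]
    exact ⟨Ne.symm hA0, fun h => hB0 (hAB h)⟩
  · rw [sum_insert hA, ZModModule.add_self]
  by_cases hxD : x ∈ D
  · have hsum : ∑ a ∈ D.erase x, a = x := by
      rw [← add_sum_erase D (fun a => a) hxD] at hD0
      exact (add_eq_zero_iff_neg_eq.mp hD0).symm.trans (ZModModule.neg_eq_self x)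
    have hDA : D.erase x = A :=
      hB.eq_of_subset_of_sum_eq ((subset_insert_iff.mp hD).trans hAB) hAB hsum
    rw [← insert_erase hxD, hDA]
  · have hDA : D ⊆ A := (subset_insert_iff_of_notMem hxD).mp hD
    exact absurd (hB.eq_empty_of_subset_of_sum_eq_zero (hDA.trans hAB) hD0) hDne.ne_empty

theorem exists_subset_sum_mem_two_le_card {M B : Finset V}
    (hB : LinearIndepOn (ZMod 2) id (B : Set V))
    (hMB : ∀ x ∈ M, x ∈ Submodule.span (ZMod 2) (B : Set V)) (hM0 : (0 : V) ∉ M)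
    (hne : M.Nonempty) (heul : ∑ x ∈ M, x = 0) :
    ∃ A ⊆ B, ∑ a ∈ A, a ∈ M ∧ 2 ≤ #A := by
  by_contra! h
  have hMB' : M ⊆ B := by
    intro x hx
    obtain ⟨A, hAB, rfl⟩ := exists_subset_sum_eq_of_mem_span (hMB _ hx)
    obtain ⟨b, hb⟩ := card_le_one_iff_subset_singleton.mp (Nat.le_of_lt_succ (h A hAB hx))
    rcases subset_singleton_iff.mp hb with rfl | rfl
    · exact absurd hx (by simpa using hM0)
    · simpa using hAB
  exact hne.ne_empty (hB.eq_empty_of_subset_of_sum_eq_zero hMB' heul)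

theorem exists_isCircuit_card_le_pow [DecidableEq V] {M B : Finset V} (hBM : B ⊆ M)
    (hB : LinearIndepOn (ZMod 2) id (B : Set V)) (hB2 : 2 ≤ #B)
    (hMB : ∀ x ∈ M, x ∈ Submodule.span (ZMod 2) (B : Set V)) (hM0 : (0 : V) ∉ M)
    (hne : M.Nonempty) (heul : ∑ x ∈ M, x = 0) :
    ∃ C ⊆ M, IsCircuit C ∧ #M ≤ #B ^ #C := by
  set R := {A ∈ B.powerset | ∑ a ∈ A, a ∈ M}
  obtain ⟨A₂, hA₂B, hA₂M, hA₂⟩ := exists_subset_sum_mem_two_le_card hB hMB hM0 hne heul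
  obtain ⟨A, hAR, hAmax⟩ :=
    exists_max_image R card ⟨A₂, mem_filter.mpr ⟨mem_powerset.mpr hA₂B, hA₂M⟩⟩
  obtain ⟨hAB, hAM⟩ : A ⊆ B ∧ ∑ a ∈ A, a ∈ M := by simpa [R] using hAR
  have hA2 : 2 ≤ #A := hA₂.trans (hAmax A₂ (by simp [R, hA₂B, hA₂M]))
  have hAsum : ∑ a ∈ A, a ∉ A := fun hmem => by
    have hA1 : A = {∑ a ∈ A, a} := hB.eq_of_subset_of_sum_eq hAB
      (singleton_subset_iff.mpr (hAB hmem)) (sum_singleton _ _).symm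
    have : #A = 1 := by rw [hA1, card_singleton]
    omega
  have hcount : #M ≤ #{A' ∈ B.powerset | #A' ≤ #A} := calc
    #M ≤ #(R.image fun A' => ∑ a ∈ A', a) := card_le_card fun x hx => by
      obtain ⟨A', hA'B, rfl⟩ := exists_subset_sum_eq_of_mem_span (hMB _ hx)
      exact mem_image_of_mem _ (by simp [R, hA'B, hx])
    _ ≤ #R := card_image_le
    _ ≤ #{A' ∈ B.powerset | #A' ≤ #A} := card_le_card fun A' hA' =>
      mem_filter.mpr ⟨(mem_filter.mp hA').1, hAmax A' hA'⟩
  refine ⟨insert (∑ a ∈ A, a) A, insert_subset hAM (hAB.trans hBM),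
    isCircuit_insert_sum hB hAB (fun h => hM0 (hBM h)) hAsum (fun h => hM0 (h ▸ hAM)), ?_⟩
  rw [card_insert_of_notMem hAsum]
  exact hcount.trans (card_filter_powerset_card_le_le_pow hB2 _)

end ZModTwo

theorem exists_linearIndepOn_card_eq_rk {n : ℕ} (M : Finset (Fin n → ZMod 2)) :
    ∃ B ⊆ M, LinearIndepOn (ZMod 2) id (B : Set (Fin n → ZMod 2)) ∧ #B = rk M ∧
      ∀ x ∈ M, x ∈ Submodule.span (ZMod 2) (B : Set (Fin n → ZMod 2)) := by
  unfold rk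
  set S := {k : ℕ | ∃ s ⊆ M, s.card = k ∧
    LinearIndependent (ZMod 2) (fun x : s => (x : Fin n → ZMod 2))}
  have hbdd : BddAbove S := ⟨#M, by rintro _ ⟨s, hs, rfl, -⟩; exact card_le_card hs⟩
  have hempty :
      LinearIndepOn (ZMod 2) id ((∅ : Finset (Fin n → ZMod 2)) : Set (Fin n → ZMod 2)) := by
    rw [coe_empty]
    exact linearIndepOn_empty _ id
  obtain ⟨B, hBM, hBcard, hB⟩ : sSup S ∈ S :=
    Nat.sSup_mem ⟨0, ∅, empty_subset M, card_empty, hempty⟩ hbdd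
  change LinearIndepOn (ZMod 2) id (B : Set (Fin n → ZMod 2)) at hB
  refine ⟨B, hBM, hB, hBcard, fun x hx => by_contra fun hxB => ?_⟩
  have hxB' : x ∉ B := fun h => hxB (Submodule.subset_span h)
  have hins : LinearIndepOn (ZMod 2) id
      ((insert x B : Finset (Fin n → ZMod 2)) : Set (Fin n → ZMod 2)) := by
    rw [coe_insert]
    exact hB.id_insert hxB
  have hle : #(insert x B) ≤ sSup S :=
    le_csSup hbdd ⟨insert x B, insert_subset hx hBM, rfl, hins⟩
  rw [card_insert_of_notMem hxB', hBcard] at hle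
  omega

/-- Every nonempty Eulerian binary matroid of rank `r ≥ 2` contains a circuit of
size at least `log |M| / log r`. -/
theorem exists_circuit_card_ge_log {n : ℕ} (M : Finset (Fin n → ZMod 2))
    (hM : (0 : Fin n → ZMod 2) ∉ M) (hne : M.Nonempty) (heul : ∑ x ∈ M, x = 0)
    (hr : 2 ≤ rk M) :
    ∃ C ⊆ M, IsCircuit C ∧
      Real.log M.card / Real.log (rk M) ≤ (C.card : ℝ) := by
  obtain ⟨B, hBM, hB, hBr, hMB⟩ := exists_linearIndepOn_card_eq_rk M
  rw [← hBr] at hr ⊢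
  obtain ⟨C, hCM, hC, hMC⟩ := exists_isCircuit_card_le_pow hBM hB hr hMB hM hne heul
  refine ⟨C, hCM, hC, ?_⟩
  rw [div_le_iff₀ (Real.log_pos (by exact_mod_cast hr)), ← Real.log_pow]
  exact Real.log_le_log (by exact_mod_cast hne.card_pos) (by exact_mod_cast hMC)
end

section
/- There exists a constant K such that every finite Eulerian set M ⊆ 𝔽₂ⁿ \ {0} can be partitioned into at most K · 2^{rank(M)}/(rank(M) + 1) circuits; i.e., c(M) = O(2^{rank(M)}/(rank(M)+1)). -/
open Finset

/-- `𝒞` is a partition of `M` into pairwise disjoint circuits. -/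
def IsCircuitPartition {V : Type*} [AddCommGroup V] [DecidableEq V]
    (M : Finset V) (𝒞 : Finset (Finset V)) : Prop :=
  (∀ C ∈ 𝒞, IsCircuit C) ∧
  (∀ C ∈ 𝒞, ∀ D ∈ 𝒞, C ≠ D → Disjoint C D) ∧
  𝒞.biUnion id = M

/-!
Induct on `|M|`, proving `c(M) (r + 1) ≤ 8 · 2^r + 4 |M|` for `r` the rank; as `|M| ≤ 2^r`, this
gives `K = 12`. If `|M| (r + 1) ≤ 24 · 2^r`, any circuit partition will do, since circuits have at
least three elements. Otherwise `r ≥ 24`, and `M` contains a circuit of size `2k`, `k = ⌊r/4⌋`: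
by Cauchy–Schwarz over the values of `k`-fold sums, at least `|M|^{2k} / 2^r` tuples in `M^{2k}`
sum to zero, at most `2^{2k} |M|^{2k-2}` of them have a proper nonempty zero-sum subtuple, and a
zero-sum tuple without one enumerates a circuit. Removing this circuit either keeps the rank, and
then its `2k ≥ (r + 1) / 4` elements pay for the extra circuit, or lowers it, and then the bound
for smaller rank is already stronger.
-/

open Module Submodule

lemma apply_eq_of_sum_eq {ι G : Type*} [DecidableEq ι] [AddCancelCommMonoid G] {A : Finset ι}
    {s : ι} {f g : ι → G} (hs : s ∈ A)
    (hsum : ∑ i ∈ A, f i = ∑ i ∈ A, g i) (hfg : ∀ i ∈ A, i ≠ s → f i = g i) : f s = g s := by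
  rw [← add_sum_erase A f hs, ← add_sum_erase A g hs,
    sum_congr rfl fun i hi => hfg i (mem_of_mem_erase hi) (ne_of_mem_erase hi)] at hsum
  exact add_right_cancel hsum

lemma Finset.card_sq_le_card_image_mul_card_filter {α β : Type*} [DecidableEq β] (s : Finset α)
    (φ : α → β) : #s ^ 2 ≤ #(s.image φ) * #{p ∈ s ×ˢ s | φ p.1 = φ p.2} := by
  have hpairs : #{p ∈ s ×ˢ s | φ p.1 = φ p.2} = ∑ b ∈ s.image φ, #{a ∈ s | φ a = b} ^ 2 := by
    rw [card_eq_sum_card_fiberwise (f := fun p => φ p.1) (t := s.image φ)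
      fun p hp => mem_image_of_mem φ (mem_product.1 (mem_filter.1 hp).1).1]
    refine sum_congr rfl fun b _ => ?_
    rw [sq, ← card_product, filter_filter]
    congr 1
    ext p
    simp only [mem_filter, mem_product]
    grind
  rw [hpairs, card_eq_sum_card_image φ s]
  exact sq_sum_le_card_mul_sum_sq

lemma card_le_two_pow_finrank {V : Type*} [AddCommGroup V] [Module (ZMod 2) V] {T M : Finset V}
    (hT : (T : Set V) ⊆ span (ZMod 2) (M : Set V)) :
    #T ≤ 2 ^ (M : Set V).finrank (ZMod 2) := by
  have := Module.finite_of_finite (ZMod 2) (M := span (ZMod 2) (M : Set V))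
  calc #T = (T : Set V).ncard := (Set.ncard_coe_finset T).symm
    _ ≤ (span (ZMod 2) (M : Set V) : Set V).ncard := Set.ncard_le_ncard hT (Set.toFinite _)
    _ = Nat.card (span (ZMod 2) (M : Set V)) := (Nat.card_coe_set_eq _).symm
    _ = 2 ^ (M : Set V).finrank (ZMod 2) := by
      rw [natCard_eq_pow_finrank (K := ZMod 2), Nat.card_zmod, Set.finrank]

lemma two_pow_mul_succ_le_of_le {m N : ℕ} (h : m ≤ N) : 2 ^ m * (N + 1) ≤ 2 ^ N * (m + 1) := by
  obtain ⟨d, rfl⟩ := Nat.exists_eq_add_of_le h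
  have hd : d + 1 ≤ 2 ^ d := Nat.lt_two_pow_self
  rw [pow_add, mul_assoc]
  gcongr 2 ^ m * ?_
  nlinarith

lemma two_pow_two_mul_div_four_mul_succ_sq_le (r : ℕ) :
    2 ^ (2 * (r / 4)) * (r + 1) ^ 2 ≤ 16 * 2 ^ r := by
  have hq : r / 4 + 1 ≤ 2 ^ (r / 4) := Nat.lt_two_pow_self
  calc 2 ^ (2 * (r / 4)) * (r + 1) ^ 2 ≤ 2 ^ (2 * (r / 4)) * (4 * 2 ^ (r / 4)) ^ 2 := by
        gcongr; omega
    _ = 16 * 2 ^ (4 * (r / 4)) := by ring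
    _ ≤ 16 * 2 ^ r := by gcongr <;> omega

lemma two_pow_mul_two_pow_lt_sq_of_lt {a r : ℕ} (h : 24 * 2 ^ r < a * (r + 1)) :
    2 ^ (2 * (r / 4)) * 2 ^ r < a ^ 2 := by
  have hsq := two_pow_two_mul_div_four_mul_succ_sq_le r
  refine lt_of_mul_lt_mul_right (a := (r + 1) ^ 2) ?_ (Nat.zero_le _)
  calc 2 ^ (2 * (r / 4)) * 2 ^ r * (r + 1) ^ 2 ≤ 16 * 2 ^ r * 2 ^ r := by
        rw [mul_right_comm]; exact Nat.mul_le_mul_right _ hsq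
    _ ≤ (24 * 2 ^ r) ^ 2 := by ring_nf; omega
    _ < (a * (r + 1)) ^ 2 := Nat.pow_lt_pow_left h two_ne_zero
    _ = a ^ 2 * (r + 1) ^ 2 := by ring

lemma succ_le_four_mul_of_lt {a r : ℕ} (h : 24 * 2 ^ r < a * (r + 1)) : r + 1 ≤ 4 * a := by
  have hsq : (r + 1) ^ 2 ≤ 16 * 2 ^ r :=
    (Nat.le_mul_of_pos_left _ (by positivity)).trans (two_pow_two_mul_div_four_mul_succ_sq_le r)
  nlinarith

lemma mul_succ_le_of_lt {c r' r : ℕ} (hc : c * (r' + 1) ≤ 12 * 2 ^ r') (hr : r' < r)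
    (h3 : 3 ≤ r) : c * (r + 1) ≤ 8 * 2 ^ r := by
  obtain ⟨r, rfl⟩ := Nat.exists_eq_add_of_lt hr
  have hmono := two_pow_mul_succ_le_of_le (Nat.le_add_right r' r)
  refine le_of_mul_le_mul_right ?_ (Nat.succ_pos r')
  calc c * (r' + r + 1 + 1) * (r' + 1) = c * (r' + 1) * (r' + r + 1 + 1) := by ring
    _ ≤ 12 * 2 ^ r' * (r' + r + 1 + 1) := by gcongr
    _ ≤ 8 * 2 ^ (r' + r + 1) * (r' + 1) := by
      rw [pow_succ]; nlinarith [Nat.mul_le_mul_left (2 ^ r') h3]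

section AddCommGroup

variable {V : Type*} [AddCommGroup V] [DecidableEq V]

lemma exists_isCircuit_subset {M : Finset V} (hM : M.Nonempty) (h0 : (0 : V) ∉ M)
    (hsum : ∑ x ∈ M, x = 0) : ∃ C ⊆ M, IsCircuit C := by
  obtain ⟨C, hCM, ⟨hC, hCsum⟩, hmin⟩ := exists_minimal_le_of_wellFoundedLT
    (fun D : Finset V => D.Nonempty ∧ ∑ x ∈ D, x = 0) M ⟨hM, hsum⟩
  exact ⟨C, hCM, hC, fun h => h0 (hCM h), hCsum,
    fun D hDC hD hDsum => le_antisymm hDC (hmin ⟨hD, hDsum⟩ hDC)⟩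

lemma sum_sdiff_eq_zero {M C : Finset V} (hCM : C ⊆ M) (hM : ∑ x ∈ M, x = 0)
    (hC : ∑ x ∈ C, x = 0) : ∑ x ∈ M \ C, x = 0 := by
  rw [sum_sdiff_eq_sub hCM, hM, hC, sub_zero]

lemma IsCircuitPartition.insert_of_sdiff {M C : Finset V} {𝒞 : Finset (Finset V)}
    (h𝒞 : IsCircuitPartition (M \ C) 𝒞) (hC : IsCircuit C) (hCM : C ⊆ M) :
    IsCircuitPartition M (insert C 𝒞) := by
  obtain ⟨hcirc, hdisj, hunion⟩ := h𝒞
  have hdisjC : ∀ D ∈ 𝒞, Disjoint C D := fun D hD =>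
    disjoint_of_subset_right (hunion ▸ subset_biUnion_of_mem id hD) disjoint_sdiff
  refine ⟨?_, ?_, ?_⟩
  · simpa [hC] using hcirc
  · simp only [mem_insert]
    rintro D₁ (rfl | h₁) D₂ (rfl | h₂) hne
    exacts [absurd rfl hne, hdisjC D₂ h₂, (hdisjC D₁ h₁).symm, hdisj D₁ h₁ D₂ h₂ hne]
  · rw [biUnion_insert, hunion, id, union_sdiff_of_subset hCM]

lemma exists_isCircuitPartition (M : Finset V) (h0 : (0 : V) ∉ M) (hsum : ∑ x ∈ M, x = 0) :
    ∃ 𝒞, IsCircuitPartition M 𝒞 := by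
  induction M using Finset.strongInduction with
  | H M ih =>
    obtain rfl | hM := M.eq_empty_or_nonempty
    · exact ⟨∅, by simp, by simp, by simp⟩
    obtain ⟨C, hCM, hC⟩ := exists_isCircuit_subset hM h0 hsum
    obtain ⟨𝒞, h𝒞⟩ := ih (M \ C) (sdiff_ssubset hCM hC.1)
      (fun h => h0 (mem_sdiff.1 h).1) (sum_sdiff_eq_zero hCM hsum hC.2.2.1)
    exact ⟨insert C 𝒞, h𝒞.insert_of_sdiff hC hCM⟩

lemma IsCircuitPartition.sum_card {M : Finset V} {𝒞 : Finset (Finset V)}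
    (h𝒞 : IsCircuitPartition M 𝒞) : ∑ C ∈ 𝒞, #C = #M := by
  rw [← h𝒞.2.2, card_biUnion (t := id) fun C hC D hD hne => h𝒞.2.1 C hC D hD hne]
  rfl

end AddCommGroup

section Tuples

variable {V : Type*} [AddCommGroup V] [DecidableEq V] {ι : Type*} [Fintype ι] [DecidableEq ι]

variable (ι) in
def zeroSumTuples (M : Finset V) : Finset (ι → V) :=
  {f ∈ Fintype.piFinset fun _ => M | ∑ i, f i = 0}

@[simp]
lemma mem_zeroSumTuples {M : Finset V} {f : ι → V} :
    f ∈ zeroSumTuples ι M ↔ (∀ i, f i ∈ M) ∧ ∑ i, f i = 0 := by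
  simp [zeroSumTuples]

/-- Each tuple counted here is determined by its entries off `{s, u}` for some `s ∈ A`, `u ∉ A`. -/
lemma card_filter_zeroSumTuples_le (M : Finset V) {A : Finset ι} (hA : A.Nonempty)
    (hAu : A ≠ univ) :
    #{f ∈ zeroSumTuples ι M | ∑ i ∈ A, f i = 0} ≤ #M ^ (Fintype.card ι - 2) := by
  obtain ⟨s, hs⟩ := hA
  obtain ⟨u, hu⟩ := not_forall.1 (mt eq_univ_iff_forall.2 hAu)
  have hsu : s ≠ u := fun h => hu (h ▸ hs)
  let R : Finset ι := univ \ {s, u}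
  have hR : #R = Fintype.card ι - 2 := by
    rw [card_sdiff_of_subset (subset_univ _), card_pair hsu, card_univ]
  calc #{f ∈ zeroSumTuples ι M | ∑ i ∈ A, f i = 0}
      ≤ #(Fintype.piFinset fun _ : R => M) := by
        refine card_le_card_of_injOn (fun f (i : R) => f i) (fun f hf => ?_) fun f hf g hg hfg => ?_
        · rw [mem_coe, mem_filter, mem_zeroSumTuples] at hf
          exact Fintype.mem_piFinset.2 fun i => hf.1.1 i
        rw [mem_coe, mem_filter, mem_zeroSumTuples] at hf hg
        have hoff : ∀ i, i ≠ s → i ≠ u → f i = g i := fun i his hiu =>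
          congrFun hfg ⟨i, by simp [R, his, hiu]⟩
        have hfs : f s = g s := apply_eq_of_sum_eq hs (hf.2.trans hg.2.symm)
          fun i hi his => hoff i his fun h => hu (h ▸ hi)
        have hfu : f u = g u := apply_eq_of_sum_eq (mem_univ u) (hf.1.2.trans hg.1.2.symm)
          fun i _ hiu => if his : i = s then his ▸ hfs else hoff i his hiu
        funext i
        exact if hiu : i = u then hiu ▸ hfu else if his : i = s then his ▸ hfs else hoff i his hiu
    _ = #M ^ (Fintype.card ι - 2) := by simp [Fintype.card_piFinset, hR]

lemma exists_mem_zeroSumTuples_forall_sum_ne_zero (M : Finset V)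
    (h : 2 ^ Fintype.card ι * #M ^ (Fintype.card ι - 2) < #(zeroSumTuples ι M)) :
    ∃ f ∈ zeroSumTuples ι M, ∀ A : Finset ι, A.Nonempty → A ≠ univ → ∑ i ∈ A, f i ≠ 0 := by
  by_contra! hbad
  let 𝒜 : Finset (Finset ι) := {A ∈ univ.powerset | A.Nonempty ∧ A ≠ univ}
  have hcover :
      zeroSumTuples ι M ⊆ 𝒜.biUnion fun A => {f ∈ zeroSumTuples ι M | ∑ i ∈ A, f i = 0} := by
    intro f hf
    obtain ⟨A, hA, hAu, hfA⟩ := hbad f hf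
    exact mem_biUnion.2 ⟨A, by simp [𝒜, hA, hAu], mem_filter.2 ⟨hf, hfA⟩⟩
  have hbadcard := (card_le_card hcover).trans (card_biUnion_le_card_mul _ _ _ fun A hA =>
    card_filter_zeroSumTuples_le M (mem_filter.1 hA).2.1 (mem_filter.1 hA).2.2)
  have h𝒜 : #𝒜 ≤ 2 ^ Fintype.card ι :=
    (card_filter_le _ _).trans_eq (by rw [card_powerset, card_univ])
  exact (hbadcard.trans (Nat.mul_le_mul_right _ h𝒜)).not_gt h

end Tuples

section CharTwo

variable {V : Type*} [AddCommGroup V] [Module (ZMod 2) V] [DecidableEq V]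

lemma IsCircuit.three_le_card {C : Finset V} (hC : IsCircuit C) : 3 ≤ #C := by
  obtain ⟨hne, h0, hsum, -⟩ := hC
  by_contra! hlt
  interval_cases h : #C
  · simp_all
  · obtain ⟨x, rfl⟩ := card_eq_one.1 h
    simp_all
  · obtain ⟨x, y, hxy, rfl⟩ := card_eq_two.1 h
    rw [sum_pair hxy, add_eq_zero_iff_eq_neg, ZModModule.neg_eq_self] at hsum
    exact hxy hsum

lemma IsCircuitPartition.three_mul_card_le {M : Finset V} {𝒞 : Finset (Finset V)}
    (h𝒞 : IsCircuitPartition M 𝒞) : 3 * #𝒞 ≤ #M := by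
  rw [← h𝒞.sum_card, mul_comm, ← smul_eq_mul, ← sum_const]
  exact sum_le_sum fun C hC => (h𝒞.1 C hC).three_le_card

lemma isCircuit_image_of_forall_sum_ne_zero {ι : Type*} [Fintype ι] [DecidableEq ι] {f : ι → V}
    (hι : 3 ≤ Fintype.card ι) (hsum : ∑ i, f i = 0)
    (hproper : ∀ A : Finset ι, A.Nonempty → A ≠ univ → ∑ i ∈ A, f i ≠ 0) :
    Function.Injective f ∧ IsCircuit (univ.image f) := by
  have hsmall : ∀ A : Finset ι, #A < 3 → A ≠ univ := fun A hA h =>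
    (h ▸ hA).not_ge (card_univ (α := ι) ▸ hι)
  have hinj : Function.Injective f := by
    intro s t hst
    by_contra hne
    refine hproper {s, t} (insert_nonempty _ _)
      (hsmall _ ((card_pair hne).trans_lt (by norm_num))) ?_
    rw [sum_pair hne, hst, ZModModule.add_self]
  have : Nonempty ι := Fintype.card_pos_iff.1 (by omega)
  refine ⟨hinj, univ_nonempty.image f, fun h0 => ?_, by rwa [sum_image hinj.injOn], ?_⟩
  · obtain ⟨s, -, hs⟩ := mem_image.1 h0
    exact hproper {s} (singleton_nonempty s) (hsmall _ (by simp)) (by simpa using hs)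
  intro D hD hDne hDsum
  let A : Finset ι := {i | f i ∈ D}
  have hAD : A.image f = D := by
    ext x
    simp only [A, mem_image, mem_filter, mem_univ, true_and]
    refine ⟨fun ⟨i, hi, hix⟩ => hix ▸ hi, fun hx => ?_⟩
    obtain ⟨i, -, rfl⟩ := mem_image.1 (hD hx)
    exact ⟨i, hx, rfl⟩
  have hA : A = univ := by
    by_contra hA
    refine hproper A (by simpa [← hAD] using hDne) hA ?_
    rwa [← hAD, sum_image hinj.injOn] at hDsum
  rw [← hAD, hA]

lemma card_zeroSumTuples_sum_eq (M : Finset V) (k : ℕ) :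
    #(zeroSumTuples (Fin k ⊕ Fin k) M) =
      #{p ∈ (Fintype.piFinset fun _ : Fin k => M) ×ˢ (Fintype.piFinset fun _ : Fin k => M) |
        ∑ i, p.1 i = ∑ i, p.2 i} :=
  card_equiv (Equiv.sumArrowEquivProdArrow _ _ _) fun f => by
    simp [Fintype.sum_sum_type, add_eq_zero_iff_eq_neg, ZModModule.neg_eq_self, Sum.forall]

lemma exists_isCircuit_subset_card_eq {M : Finset V} {k : ℕ} (hk : 2 ≤ k)
    (hM : 2 ^ (2 * k) * 2 ^ (M : Set V).finrank (ZMod 2) < #M ^ 2) :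
    ∃ C ⊆ M, IsCircuit C ∧ #C = 2 * k := by
  set P := Fintype.piFinset fun _ : Fin k => M
  have hcard : Fintype.card (Fin k ⊕ Fin k) = 2 * k := by simp [two_mul]
  have hsums : #(P.image fun g => ∑ i, g i) ≤ 2 ^ (M : Set V).finrank (ZMod 2) := by
    refine card_le_two_pow_finrank fun v hv => ?_
    obtain ⟨g, hg, rfl⟩ := mem_image.1 hv
    exact sum_mem fun i _ => subset_span (Fintype.mem_piFinset.1 hg i)
  have hCS :
      #M ^ (2 * k) ≤ 2 ^ (M : Set V).finrank (ZMod 2) * #(zeroSumTuples (Fin k ⊕ Fin k) M) := by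
    calc #M ^ (2 * k) = #P ^ 2 := by rw [Fintype.card_piFinset]; simp [pow_mul']
      _ ≤ _ := card_sq_le_card_image_mul_card_filter P _
      _ ≤ _ := by rw [card_zeroSumTuples_sum_eq]; exact Nat.mul_le_mul_right _ hsums
  have hcount : 2 ^ Fintype.card (Fin k ⊕ Fin k) * #M ^ (Fintype.card (Fin k ⊕ Fin k) - 2) <
      #(zeroSumTuples (Fin k ⊕ Fin k) M) := by
    rw [hcard]
    refine Nat.lt_of_mul_lt_mul_left (a := 2 ^ (M : Set V).finrank (ZMod 2)) (lt_of_lt_of_le ?_ hCS)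
    have : #M ^ (2 * k) = #M ^ 2 * #M ^ (2 * k - 2) := by rw [← pow_add]; congr 1; omega
    rw [this]
    have hpos : 0 < #M ^ (2 * k - 2) := pow_pos (Nat.pos_of_ne_zero fun h => by simp [h] at hM) _
    nlinarith
  obtain ⟨f, hf, hproper⟩ := exists_mem_zeroSumTuples_forall_sum_ne_zero M hcount
  obtain ⟨hinj, hC⟩ :=
    isCircuit_image_of_forall_sum_ne_zero (by omega) (mem_zeroSumTuples.1 hf).2 hproper
  refine ⟨univ.image f, fun x hx => ?_, hC,
    by rw [card_image_of_injective _ hinj, card_univ, hcard]⟩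
  obtain ⟨i, -, rfl⟩ := mem_image.1 hx
  exact (mem_zeroSumTuples.1 hf).1 i

theorem exists_isCircuitPartition_card_mul_succ_le (M : Finset V) (h0 : (0 : V) ∉ M)
    (hsum : ∑ x ∈ M, x = 0) :
    ∃ 𝒞, IsCircuitPartition M 𝒞 ∧
      #𝒞 * ((M : Set V).finrank (ZMod 2) + 1) ≤ 8 * 2 ^ (M : Set V).finrank (ZMod 2) + 4 * #M := by
  induction M using Finset.strongInduction with
  | H M ih =>
    set r := (M : Set V).finrank (ZMod 2)
    have hMr : #M ≤ 2 ^ r := card_le_two_pow_finrank subset_span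
    by_cases hsmall : #M * (r + 1) ≤ 24 * 2 ^ r
    · obtain ⟨𝒞, h𝒞⟩ := exists_isCircuitPartition M h0 hsum
      have := Nat.mul_le_mul_right (r + 1) h𝒞.three_mul_card_le
      exact ⟨𝒞, h𝒞, by nlinarith⟩
    push Not at hsmall
    have hr : 24 ≤ r := by
      by_contra! hr
      exact hsmall.not_ge (by nlinarith [Nat.mul_le_mul hMr (show r + 1 ≤ 24 by omega)])
    obtain ⟨C, hCM, hC, hCcard⟩ :=
      exists_isCircuit_subset_card_eq (by omega) (two_pow_mul_two_pow_lt_sq_of_lt hsmall)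
    obtain ⟨𝒞, h𝒞, hbound⟩ := ih (M \ C) (sdiff_ssubset hCM hC.1)
      (fun h => h0 (mem_sdiff.1 h).1) (sum_sdiff_eq_zero hCM hsum hC.2.2.1)
    refine ⟨insert C 𝒞, h𝒞.insert_of_sdiff hC hCM,
      (Nat.mul_le_mul_right _ (card_insert_le C 𝒞)).trans ?_⟩
    have hcard : #(M \ C) + 2 * (r / 4) = #M := by
      rw [← hCcard, card_sdiff_add_card_eq_card hCM]
    have hr' : ((M \ C : Finset V) : Set V).finrank (ZMod 2) ≤ r :=
      finrank_mono (span_mono (by simp))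
    rcases hr'.eq_or_lt with heq | hlt
    · rw [heq] at hbound
      have : r + 1 ≤ 8 * (r / 4) := by omega
      nlinarith
    · have hM'r := card_le_two_pow_finrank (T := M \ C) subset_span
      have := mul_succ_le_of_lt (by nlinarith) hlt (by omega)
      have := succ_le_four_mul_of_lt hsmall
      nlinarith

end CharTwo

lemma rk_eq_finrank {n : ℕ} (M : Finset (Fin n → ZMod 2)) :
    rk M = (M : Set (Fin n → ZMod 2)).finrank (ZMod 2) := by
  refine IsGreatest.csSup_eq ⟨?_, ?_⟩
  · obtain ⟨b, hbM, hspan, hb⟩ := exists_linearIndependent (ZMod 2) (M : Set (Fin n → ZMod 2))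
    have hbfin : b.Finite := M.finite_toSet.subset hbM
    have hs : LinearIndepOn (ZMod 2) id (hbfin.toFinset : Set (Fin n → ZMod 2)) := by
      rw [hbfin.coe_toFinset]; exact hb
    refine ⟨hbfin.toFinset, by simpa using hbM, ?_, hs⟩
    rw [Set.finrank, ← hspan, ← finrank_span_finset_eq_card hs, hbfin.coe_toFinset]
  · rintro k ⟨s, hsM, rfl, hs⟩
    rw [← finrank_span_finset_eq_card hs]
    exact finrank_mono (span_mono (by simpa using hsM))

/-- Every Eulerian binary matroid can be partitioned into
`O(2^{rank M}/(rank M + 1))` circuits. -/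
theorem circuit_decomposition_big_O :
    ∃ K : ℝ, 0 < K ∧
      ∀ (n : ℕ) (M : Finset (Fin n → ZMod 2)),
        (0 : Fin n → ZMod 2) ∉ M → ∑ x ∈ M, x = 0 →
        ∃ 𝒞 : Finset (Finset (Fin n → ZMod 2)), IsCircuitPartition M 𝒞 ∧
          (𝒞.card : ℝ) ≤ K * 2 ^ rk M / (rk M + 1) := by
  refine ⟨12, by norm_num, fun n M h0 hsum => ?_⟩
  obtain ⟨𝒞, h𝒞, hbound⟩ := exists_isCircuitPartition_card_mul_succ_le M h0 hsum
  have hM := card_le_two_pow_finrank (T := M) subset_span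
  rw [← rk_eq_finrank] at hbound hM
  refine ⟨𝒞, h𝒞, (le_div_iff₀ (by positivity)).2 ?_⟩
  exact_mod_cast (show #𝒞 * (rk M + 1) ≤ 12 * 2 ^ rk M by omega)
end
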